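/- Let G ≠ directed cycle be a strongly connected digraph with arc (u,v), and let w be a new vertex not in V(G). Form G^w by subdividing the arc (u,v): V(G^w) = V(G) ∪ {w} and E(G^w) = E(G) − (u,v) + {(u,w),(w,v)}. Then q(G) ≥ q(G^w). -/

import Mathlib

open Matrix

/-- Adjacency matrix of a digraph given by the arc relation `E`. -/
def adjMatrix {V : Type} [Fintype V] (E : V → V → Prop) [DecidableRel E] : Matrix V V ℝ :=
  fun i j => if E i j then 1 else 0

/-- Outdegree of a vertex in the digraph `E`. -/
def outdeg {V : Type} [Fintype V] (E : V → V → Prop) [DecidableRel E] (i : V) : ℕ :=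
  (Finset.univ.filter (fun j => E i j)).card

/-- Signless Laplacian `Q = D⁺ + A` of the digraph `E`. -/
def signlessLaplacian {V : Type} [Fintype V] [DecidableEq V] (E : V → V → Prop)
    [DecidableRel E] : Matrix V V ℝ :=
  Matrix.diagonal (fun i => (outdeg E i : ℝ)) + adjMatrix E

/-- Q-index: the spectral radius of the signless Laplacian of the digraph `E`. -/
noncomputable def qIndex {V : Type} [Fintype V] [DecidableEq V] (E : V → V → Prop)
    [DecidableRel E] : ℝ :=
  sSup ((fun z : ℂ => ‖z‖) '' spectrum ℂ ((signlessLaplacian E).map Complex.ofReal))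

/-- A digraph is strongly connected if every vertex reaches every vertex by a directed path. -/
def StronglyConnected {V : Type} (E : V → V → Prop) : Prop :=
  ∀ i j : V, Relation.ReflTransGen E i j

/-!
Let `ρ = q(G^w)`. Taking absolute values of an eigenvector of `Q(G^w)` for an eigenvalue of
modulus `ρ` gives `y ≥ 0`, `y ≠ 0` with `ρ y ≤ Q(G^w) y`. A vertex of outdegree at least `2`
forces `ρ ≥ 2`, and then the row of `w`, `ρ y_w ≤ y_w + y_v`, yields `y_w ≤ y_v`. Rows of
`Q(G^w)` and `Q(G)` at old vertices agree except at `u`, where `y_w` replaces `y_v`; so the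
restriction `x` of `y` to `V(G)` satisfies `ρ x ≤ Q(G) x`. By the Collatz–Wielandt bound (a
consequence of Gelfand's formula: `ρ^k ≤ ‖Q(G)^k‖`) this gives `ρ ≤ q(G)`.
-/

namespace Matrix

variable {m : Type} [Fintype m]

theorem mulVec_mono {A : Matrix m m ℝ} (hA : ∀ i j, 0 ≤ A i j) {x y : m → ℝ} (hxy : x ≤ y) :
    A *ᵥ x ≤ A *ᵥ y := fun i =>
  Finset.sum_le_sum fun j _ => mul_le_mul_of_nonneg_left (hxy j) (hA i j)

theorem map_ofReal_mulVec (M : Matrix m m ℝ) (x : m → ℝ) :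
    M.map Complex.ofReal *ᵥ (fun i => (x i : ℂ)) = fun i => ((M *ᵥ x) i : ℂ) := by
  ext i
  simp [mulVec, dotProduct]

variable [DecidableEq m]

noncomputable def complexSpectralRadius (M : Matrix m m ℝ) : ℝ :=
  sSup ((fun z : ℂ => ‖z‖) '' spectrum ℂ (M.map Complex.ofReal))

theorem complexSpectralRadius_nonneg (M : Matrix m m ℝ) : 0 ≤ M.complexSpectralRadius :=
  Real.sSup_nonneg <| by rintro _ ⟨z, -, rfl⟩; exact norm_nonneg z

theorem norm_le_complexSpectralRadius {M : Matrix m m ℝ} {z : ℂ}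
    (hz : z ∈ spectrum ℂ (M.map Complex.ofReal)) : ‖z‖ ≤ M.complexSpectralRadius :=
  le_csSup ((finite_spectrum _).image _).bddAbove ⟨z, hz, rfl⟩

theorem spectralRadius_le_complexSpectralRadius (M : Matrix m m ℝ) :
    spectralRadius ℂ (M.map Complex.ofReal) ≤ ENNReal.ofReal M.complexSpectralRadius :=
  iSup₂_le fun z hz => by
    rw [← ENNReal.ofReal_coe_nnreal, coe_nnnorm]
    exact ENNReal.ofReal_le_ofReal (norm_le_complexSpectralRadius hz)

theorem pow_smul_le_pow_mulVec {M : Matrix m m ℝ} (hM : ∀ i j, 0 ≤ M i j) {x : m → ℝ} {r : ℝ}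
    (hr : 0 ≤ r) (h : r • x ≤ M *ᵥ x) (k : ℕ) : r ^ k • x ≤ (M ^ k) *ᵥ x := by
  induction k with
  | zero => simp
  | succ k ih =>
    calc r ^ (k + 1) • x = r ^ k • r • x := by rw [pow_succ, mul_smul]
      _ ≤ r ^ k • (M *ᵥ x) := smul_le_smul_of_nonneg_left h (pow_nonneg hr k)
      _ = M *ᵥ (r ^ k • x) := (mulVec_smul M _ x).symm
      _ ≤ M *ᵥ ((M ^ k) *ᵥ x) := mulVec_mono hM ih
      _ = (M ^ (k + 1)) *ᵥ x := by rw [mulVec_mulVec, pow_succ']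

section linftyOp

-- Gelfand's formula needs a Banach algebra norm on matrices; any one will do.
attribute [local instance] Matrix.linftyOpNormedRing Matrix.linftyOpNormedAlgebra

theorem exists_norm_eq_complexSpectralRadius [Nonempty m] (M : Matrix m m ℝ) :
    ∃ z ∈ spectrum ℂ (M.map Complex.ofReal), ‖z‖ = M.complexSpectralRadius :=
  ((spectrum.nonempty _).image _).csSup_mem ((finite_spectrum _).image _)

theorem pow_le_norm_pow_of_smul_le_mulVec {M : Matrix m m ℝ} (hM : ∀ i j, 0 ≤ M i j)
    {x : m → ℝ} (hx : 0 ≤ x) (hx0 : x ≠ 0) {r : ℝ} (hr : 0 ≤ r) (h : r • x ≤ M *ᵥ x) (k : ℕ) :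
    r ^ k ≤ ‖(M.map Complex.ofReal) ^ k‖ := by
  set x' : m → ℂ := fun i => (x i : ℂ)
  have hx'0 : 0 < ‖x'‖ := norm_pos_iff.mpr fun h0 => hx0 <| funext fun i => by
    simpa [x'] using congrFun h0 i
  have hpow : (M.map Complex.ofReal) ^ k = (M ^ k).map Complex.ofReal :=
    (Matrix.map_pow M Complex.ofRealHom k).symm
  have : r ^ k * ‖x'‖ ≤ ‖(M.map Complex.ofReal) ^ k *ᵥ x'‖ := by
    rw [← Real.norm_of_nonneg (pow_nonneg hr k), ← norm_smul]
    refine (pi_norm_le_iff_of_nonneg (norm_nonneg _)).mpr fun i => ?_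
    refine le_trans ?_ (norm_le_pi_norm _ i)
    have hi := pow_smul_le_pow_mulVec hM hr h k i
    rw [hpow, map_ofReal_mulVec]
    simpa [x', abs_of_nonneg (hx i), abs_of_nonneg hr] using hi.trans (le_abs_self _)
  exact le_of_mul_le_mul_right (this.trans (linfty_opNorm_mulVec _ _)) hx'0

theorem le_complexSpectralRadius_of_smul_le_mulVec {M : Matrix m m ℝ} (hM : ∀ i j, 0 ≤ M i j)
    {x : m → ℝ} (hx : 0 ≤ x) (hx0 : x ≠ 0) {r : ℝ} (h : r • x ≤ M *ᵥ x) :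
    r ≤ M.complexSpectralRadius := by
  rcases lt_or_ge r 0 with hr | hr
  · exact hr.le.trans M.complexSpectralRadius_nonneg
  have hroot : ∀ k : ℕ, 1 ≤ k →
      ENNReal.ofReal r ≤ ENNReal.ofReal (‖(M.map Complex.ofReal) ^ k‖ ^ (1 / k : ℝ)) := by
    intro k hk
    refine ENNReal.ofReal_le_ofReal ?_
    rw [← Real.pow_rpow_inv_natCast hr (by omega : k ≠ 0), one_div]
    exact Real.rpow_le_rpow (pow_nonneg hr k) (pow_le_norm_pow_of_smul_le_mulVec hM hx hx0 hr h k)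
      (by positivity)
  have := ge_of_tendsto (spectrum.pow_norm_pow_one_div_tendsto_nhds_spectralRadius _)
    (Filter.eventually_atTop.mpr ⟨1, hroot⟩)
  exact (ENNReal.ofReal_le_ofReal_iff M.complexSpectralRadius_nonneg).mp
    (this.trans (spectralRadius_le_complexSpectralRadius M))

theorem exists_nonneg_complexSpectralRadius_smul_le_mulVec [Nonempty m] {M : Matrix m m ℝ}
    (hM : ∀ i j, 0 ≤ M i j) :
    ∃ y : m → ℝ, 0 ≤ y ∧ y ≠ 0 ∧ M.complexSpectralRadius • y ≤ M *ᵥ y := by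
  obtain ⟨μ, hμ, hμρ⟩ := exists_norm_eq_complexSpectralRadius M
  have hμ' : μ ∈ spectrum ℂ (M.map Complex.ofReal).toLin' := by rwa [spectrum_toLin']
  obtain ⟨z, hz⟩ := (Module.End.hasEigenvalue_iff_mem_spectrum.mpr hμ').exists_hasEigenvector
  have hBz : M.map Complex.ofReal *ᵥ z = μ • z := hz.apply_eq_smul
  refine ⟨fun i => ‖z i‖, fun i => norm_nonneg _, fun h0 => hz.right ?_, fun i => ?_⟩
  · exact funext fun i => norm_eq_zero.mp (congrFun h0 i)
  calc M.complexSpectralRadius * ‖z i‖ = ‖(M.map Complex.ofReal *ᵥ z) i‖ := by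
        rw [hBz, Pi.smul_apply, smul_eq_mul, norm_mul, hμρ]
    _ ≤ ∑ j, ‖M i j‖ * ‖z j‖ := by
        simpa [mulVec, dotProduct] using
          norm_sum_le Finset.univ fun j => (M i j : ℂ) * z j
    _ = (M *ᵥ fun i => ‖z i‖) i := by
        simp [mulVec, dotProduct, Real.norm_of_nonneg (hM _ _)]

end linftyOp
end Matrix

section Digraph

variable {V : Type} [Fintype V]

theorem outdeg_eq_sum (E : V → V → Prop) [DecidableRel E] (i : V) :
    outdeg E i = ∑ j, if E i j then 1 else 0 :=
  Finset.card_filter _ _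

theorem StronglyConnected.outdeg_pos {E : V → V → Prop} [DecidableRel E]
    (hsc : StronglyConnected E) {u v : V} (harc : E u v) (i : V) : 0 < outdeg E i := by
  obtain ⟨j, hj⟩ : ∃ j, E i j := by
    rcases (hsc i u).cases_head with rfl | ⟨j, hj, -⟩
    exacts [⟨v, harc⟩, ⟨j, hj⟩]
  exact Finset.card_pos.mpr ⟨j, Finset.mem_filter.mpr ⟨Finset.mem_univ j, hj⟩⟩

variable [DecidableEq V] {E : V → V → Prop} [DecidableRel E]

theorem signlessLaplacian_apply (i j : V) :
    signlessLaplacian E i j = (if i = j then (outdeg E i : ℝ) else 0) + if E i j then 1 else 0 := by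
  simp [signlessLaplacian, adjMatrix, diagonal_apply]

theorem signlessLaplacian_nonneg (i j : V) : 0 ≤ signlessLaplacian E i j := by
  rw [signlessLaplacian_apply]
  positivity

theorem signlessLaplacian_mulVec (y : V → ℝ) (i : V) :
    (signlessLaplacian E *ᵥ y) i = outdeg E i * y i + ∑ j, if E i j then y j else 0 := by
  rw [signlessLaplacian, add_mulVec, Pi.add_apply, mulVec_diagonal]
  simp [adjMatrix, mulVec, dotProduct]

theorem qIndex_eq_complexSpectralRadius (E : V → V → Prop) [DecidableRel E] :
    qIndex E = (signlessLaplacian E).complexSpectralRadius :=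
  rfl

theorem outdeg_le_qIndex (a : V) : (outdeg E a : ℝ) ≤ qIndex E := by
  refine le_complexSpectralRadius_of_smul_le_mulVec signlessLaplacian_nonneg
    (x := Pi.single a 1) (Pi.single_nonneg.mpr zero_le_one) (by simp) fun b => ?_
  rw [mulVec_single_one]
  rcases eq_or_ne b a with rfl | hb
  · simp only [signlessLaplacian_apply, col_apply, Pi.smul_apply, Pi.single_eq_same]
    split_ifs <;> simp
  · simpa [hb] using signlessLaplacian_nonneg b a

end Digraph

section Subdivision

variable {V : Type}

/-- The new vertex `w` of `G^w` is `none`. -/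
def subdivideArc (G : V → V → Prop) (u v : V) : Option V → Option V → Prop := fun a b =>
  (∃ i j : V, a = some i ∧ b = some j ∧ G i j ∧ ¬ (i = u ∧ j = v)) ∨
    (a = some u ∧ b = none) ∨ (a = none ∧ b = some v)

variable {G : V → V → Prop} {u v : V}

@[simp]
theorem subdivideArc_some_some (i j : V) :
    subdivideArc G u v (some i) (some j) ↔ G i j ∧ ¬ (i = u ∧ j = v) := by
  simp [subdivideArc]

@[simp]
theorem subdivideArc_some_none (i : V) : subdivideArc G u v (some i) none ↔ i = u := by
  simp [subdivideArc]

@[simp]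
theorem subdivideArc_none_some (j : V) : subdivideArc G u v none (some j) ↔ j = v := by
  simp [subdivideArc]

@[simp]
theorem subdivideArc_none_none : ¬ subdivideArc G u v none none := by
  simp [subdivideArc]

variable [Fintype V] [DecidableEq V]

theorem outdeg_subdivideArc_none [DecidableRel (subdivideArc G u v)] :
    outdeg (subdivideArc G u v) none = 1 := by
  rw [outdeg_eq_sum, Fintype.sum_option]
  simp

theorem signlessLaplacian_subdivideArc_mulVec_none [DecidableRel (subdivideArc G u v)]
    (y : Option V → ℝ) :
    (signlessLaplacian (subdivideArc G u v) *ᵥ y) none = y none + y (some v) := by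
  rw [signlessLaplacian_mulVec, outdeg_subdivideArc_none, Fintype.sum_option]
  simp

variable [DecidableRel G]

theorem sum_ite_ne_arc_add {M : Type*} [AddCommMonoid M] (harc : G u v) (i : V) (f : V → M) :
    (∑ j, if G i j ∧ ¬ (i = u ∧ j = v) then f j else 0) + (if i = u then f v else 0) =
      ∑ j, if G i j then f j else 0 := by
  have hsingle : (if i = u then f v else 0) = ∑ j, if i = u ∧ j = v then f j else 0 := by
    split_ifs with hi <;> simp [hi]
  rw [hsingle, ← Finset.sum_add_distrib]
  refine Finset.sum_congr rfl fun j _ => ?_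
  by_cases hij : i = u ∧ j = v
  · obtain ⟨rfl, rfl⟩ := hij
    simp [harc]
  · simp [hij]

variable [DecidableRel (subdivideArc G u v)]

theorem outdeg_subdivideArc_some (harc : G u v) (i : V) :
    outdeg (subdivideArc G u v) (some i) = outdeg G i := by
  rw [outdeg_eq_sum, outdeg_eq_sum, Fintype.sum_option, ← sum_ite_ne_arc_add harc i]
  simp [add_comm]

theorem signlessLaplacian_subdivideArc_mulVec_some (harc : G u v) (y : Option V → ℝ) (i : V) :
    (signlessLaplacian (subdivideArc G u v) *ᵥ y) (some i) + (if i = u then y (some v) else 0) =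
      (signlessLaplacian G *ᵥ (y ∘ some)) i + (if i = u then y none else 0) := by
  rw [signlessLaplacian_mulVec, signlessLaplacian_mulVec, outdeg_subdivideArc_some harc,
    Fintype.sum_option, ← sum_ite_ne_arc_add harc i]
  simp only [subdivideArc_some_none, subdivideArc_some_some, Function.comp_apply]
  ring

theorem qIndex_subdivideArc_le (harc : G u v) {a : V} (ha : 2 ≤ outdeg G a) :
    qIndex (subdivideArc G u v) ≤ qIndex G := by
  have hρ : 2 ≤ qIndex (subdivideArc G u v) := by
    have := outdeg_le_qIndex (E := subdivideArc G u v) (some a)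
    rw [outdeg_subdivideArc_some harc] at this
    exact le_trans (by exact_mod_cast ha) this
  rw [qIndex_eq_complexSpectralRadius, qIndex_eq_complexSpectralRadius] at *
  obtain ⟨y, hy, hy0, hρy⟩ := exists_nonneg_complexSpectralRadius_smul_le_mulVec
    (M := signlessLaplacian (subdivideArc G u v)) signlessLaplacian_nonneg
  have hwv : y none ≤ y (some v) := by
    have := hρy none
    rw [Pi.smul_apply, smul_eq_mul, signlessLaplacian_subdivideArc_mulVec_none] at this
    nlinarith [mul_nonneg (sub_nonneg.mpr hρ) (hy none)]
  refine le_complexSpectralRadius_of_smul_le_mulVec signlessLaplacian_nonneg (x := y ∘ some)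
    (fun i => hy (some i)) (fun hx => hy0 ?_) fun i => ?_
  · have hv : y (some v) = 0 := congrFun hx v
    funext b
    cases b with
    | none => exact le_antisymm (hv ▸ hwv :) (hy none)
    | some i => exact congrFun hx i
  · have hrow := signlessLaplacian_subdivideArc_mulVec_some harc y i
    have hρi := hρy (some i)
    simp only [Pi.smul_apply, smul_eq_mul, Function.comp_apply] at hρi ⊢
    split_ifs at hrow <;> linarith

end Subdivision

open scoped Classical in
/-- Subdivision lemma: let `G` be a strongly connected digraph that is not a directed cycle
(equivalently, some vertex has outdegree `≠ 1`) with arc `(u,v)`, and let `G^w` (on the vertex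
set `Option V`, the new vertex being `none`) be obtained by replacing the arc `(u,v)` with the
arcs `(u,w)` and `(w,v)`. Then `q(G) ≥ q(G^w)`. -/
theorem stmt8 {V : Type} [Fintype V] [DecidableEq V]
    (G : V → V → Prop) [DecidableRel G]
    (hsc : StronglyConnected G) (hnotcycle : ∃ u, outdeg G u ≠ 1)
    (u v : V) (harc : G u v) :
    qIndex G ≥ qIndex (fun a b : Option V =>
      (∃ i j : V, a = some i ∧ b = some j ∧ G i j ∧ ¬ (i = u ∧ j = v)) ∨
      (a = some u ∧ b = none) ∨ (a = none ∧ b = some v)) := by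
  obtain ⟨a, ha⟩ := hnotcycle
  have ha2 : 2 ≤ outdeg G a := by
    have := hsc.outdeg_pos harc a
    omega
  -- The statement's decidability instance is the classical one; `convert` matches it.
  convert qIndex_subdivideArc_le harc ha2 using 2
  rfl
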